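/- arXiv:2305.07802 — 2 statements merged into one kernel-verified Lean document; each statement's English description precedes it below -/
import Mathlib

section
/- Let N ≥ 4 be an integer, let b ∈ ℝ with |b| < 1, and define κ(a,b) = 1 + b/a for a > 0 and ζ(a,b) = 1/2 + √(1/4 − b/a) for a > 0 with a ≥ 4b. Then for every y ∈ ℝ^{N−1} with |y| ≥ 1 and every z ∈ ℝ^{N−1}, the following equivalence holds: z = κ(|y|²,b)·y if and only if |z|² ≥ 4b and y = ζ(|z|²,b)·z. -/
open Real

/-- `κ(a,b) = 1 + b/a`. -/
noncomputable def kappaFn (a b : ℝ) : ℝ := 1 + b / a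

/-- `ζ(a,b) = 1/2 + √(1/4 − b/a)`. -/
noncomputable def zetaFn (a b : ℝ) : ℝ := 1 / 2 + Real.sqrt (1 / 4 - b / a)

/-!
If `z = κ(a,b) y` with `a = |y|²`, then `|z|² = (a+b)²/a ≥ 4b`, and `ζ(|z|², b)` is the larger root
`a/(a+b)` of `|z|² t² − |z|² t + b = 0` because `a ≥ 1 > b`; so `ζ κ = 1`. Conversely, since
`ζ = ζ(|z|², b)` is a root of that quadratic, `|y|² = ζ²|z|²` gives `κ(|y|², b) = (ζ²|z|² + b)/(ζ²|z|²)
= 1/ζ`. In both directions the two scalars are reciprocal, so one relation inverts the other.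
-/

lemma norm_smul_sq {E : Type*} [NormedAddCommGroup E] [NormedSpace ℝ E] (c : ℝ) (x : E) :
    ‖c • x‖ ^ 2 = c ^ 2 * ‖x‖ ^ 2 := by
  rw [norm_smul, mul_pow, Real.norm_eq_abs, sq_abs]

lemma kappaFn_sq_mul {a : ℝ} (ha : a ≠ 0) (b : ℝ) : kappaFn a b ^ 2 * a = (a + b) ^ 2 / a := by
  unfold kappaFn
  field_simp

lemma four_mul_le_kappaFn_sq_mul {a : ℝ} (ha : 0 < a) (b : ℝ) : 4 * b ≤ kappaFn a b ^ 2 * a := by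
  rw [kappaFn_sq_mul ha.ne', le_div_iff₀ ha]
  nlinarith [sq_nonneg (a - b)]

lemma zetaFn_kappaFn_sq_mul_mul_kappaFn {a b : ℝ} (ha : 0 < a) (hab : 0 < a + b) (hba : b ≤ a) :
    zetaFn (kappaFn a b ^ 2 * a) b * kappaFn a b = 1 := by
  have hsq : 1 / 4 - b / ((a + b) ^ 2 / a) = ((a - b) / (2 * (a + b))) ^ 2 := by
    field_simp
    ring
  have hsqrt : 0 ≤ (a - b) / (2 * (a + b)) := div_nonneg (by linarith) (by linarith)
  rw [zetaFn, kappaFn_sq_mul ha.ne', hsq, Real.sqrt_sq hsqrt, kappaFn]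
  field_simp
  ring

lemma zetaFn_sq_mul_add {s b : ℝ} (hs : 0 < s) (hb : 4 * b ≤ s) :
    zetaFn s b ^ 2 * s + b = zetaFn s b * s := by
  have hq : 0 ≤ 1 / 4 - b / s := by
    rw [sub_nonneg, div_le_iff₀ hs]
    linarith
  have hsq := Real.sq_sqrt hq
  unfold zetaFn
  generalize Real.sqrt (1 / 4 - b / s) = t at hsq
  field_simp at hsq
  linear_combination hsq / 4

lemma kappaFn_zetaFn_sq_mul_mul_zetaFn {s b : ℝ} (hs : 0 < s) (hb : 4 * b ≤ s) :
    kappaFn (zetaFn s b ^ 2 * s) b * zetaFn s b = 1 := by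
  have hζ : 0 < zetaFn s b := by unfold zetaFn; positivity
  unfold kappaFn
  field_simp
  linear_combination zetaFn_sq_mul_add hs hb

theorem stmt3_general (N : ℕ) (b : ℝ) (hb : |b| < 1)
    (y z : EuclideanSpace ℝ (Fin (N - 1))) (hy : 1 ≤ ‖y‖) :
    z = kappaFn (‖y‖ ^ 2) b • y ↔ (4 * b ≤ ‖z‖ ^ 2 ∧ y = zetaFn (‖z‖ ^ 2) b • z) := by
  obtain ⟨hb₁, hb₂⟩ := abs_lt.mp hb
  have ha : 1 ≤ ‖y‖ ^ 2 := one_le_pow₀ hy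
  constructor
  · rintro rfl
    rw [norm_smul_sq]
    refine ⟨four_mul_le_kappaFn_sq_mul (by linarith) b, ?_⟩
    rw [smul_smul, zetaFn_kappaFn_sq_mul_mul_kappaFn (by linarith) (by linarith) (by linarith),
      one_smul]
  · rintro ⟨h4b, rfl⟩
    have hz : z ≠ 0 := by
      rintro rfl
      norm_num at hy
    rw [norm_smul_sq, smul_smul,
      kappaFn_zetaFn_sq_mul_mul_zetaFn (by positivity) h4b, one_smul]

theorem stmt3 (N : ℕ) (hN : 4 ≤ N) (b : ℝ) (hb : |b| < 1)
    (y z : EuclideanSpace ℝ (Fin (N - 1))) (hy : 1 ≤ ‖y‖) :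
    z = kappaFn (‖y‖ ^ 2) b • y ↔ (4 * b ≤ ‖z‖ ^ 2 ∧ y = zetaFn (‖z‖ ^ 2) b • z) :=
  stmt3_general N b hb y z hy
end

section
/- Let N ≥ 4 be an integer, T > 0, and let Ω_1 = {(y,τ) ∈ ℝ^{N−1}×ℝ : |y| > 1}. Suppose w is continuous on the closure of Ω_1, twice continuously differentiable in Ω_1, 2π-periodic in the τ-variable, satisfies Δ_y w + (2π/T)² ∂²w/∂τ² = 0 in Ω_1, w = 0 on ∂Ω_1 = {|y| = 1}, and w(y,τ) → 0 as |y| → ∞ uniformly in τ ∈ ℝ. Then w ≡ 0 on the closure of Ω_1. -/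
/-!
If `w` were positive somewhere, perturb it by the barrier `δ exp y_i`, whose Laplacian in `y` is
positive, so that `Δ_y + c ∂²/∂τ²` of the perturbation is strictly positive. Periodicity in `τ`
reduces to the compact annulus `1 ≤ |y| ≤ R` times one period; for `δ` small and `R` large the
boundary values there are below the value at the chosen point, so the maximum is interior. At an
interior maximum every second directional derivative is `≤ 0`, a contradiction. Applying this weak
maximum principle to `w` and `-w` gives `w = 0`.
-/

open Real Filter Topology Set

/-- Second directional derivative of `u` at `x` in direction `v`. -/
noncomputable def sdd {E : Type*} [NormedAddCommGroup E] [NormedSpace ℝ E]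
    (u : E → ℝ) (x v : E) : ℝ :=
  fderiv ℝ (fun y => fderiv ℝ u y v) x v

theorem deriv_deriv_nonpos_of_isLocalMax {f : ℝ → ℝ} {a : ℝ} (hmax : IsLocalMax f a)
    (hf : ContinuousAt f a) : deriv (deriv f) a ≤ 0 := by
  by_contra! hpos
  -- a strict second-order minimum at a local maximum makes `f` locally constant
  have hmin := isLocalMin_of_deriv_deriv_pos hpos hmax.deriv_eq_zero hf
  have hconst : f =ᶠ[𝓝 a] fun _ => f a := by
    filter_upwards [hmax, hmin] with x hx₁ hx₂ using le_antisymm hx₁ hx₂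
  have hderiv : deriv f =ᶠ[𝓝 a] fun _ => 0 := by
    simpa using hconst.deriv
  simp [hderiv.deriv_eq] at hpos

section SecondDirectionalDerivative

variable {E : Type*} [NormedAddCommGroup E] [NormedSpace ℝ E] {v w : E → ℝ} {x : E}

theorem ContDiffAt.differentiableAt_fderiv_apply (hv : ContDiffAt ℝ 2 v x) (u : E) :
    DifferentiableAt ℝ (fun y => fderiv ℝ v y u) x :=
  ((hv.fderiv_right (m := 1) (by norm_num)).differentiableAt (by norm_num)).clm_apply
    (differentiableAt_const u)

theorem sdd_eq_deriv_deriv (hv : ContDiffAt ℝ 2 v x) (u : E) :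
    sdd v x u = deriv (deriv fun t : ℝ => v (x + t • u)) 0 := by
  have hline : ∀ t : ℝ, HasDerivAt (fun s : ℝ => x + s • u) u t := fun t => by
    simpa using ((hasDerivAt_id t).smul_const u).const_add x
  have hline_cont : Tendsto (fun t : ℝ => x + t • u) (𝓝 0) (𝓝 x) := by
    simpa using (hline 0).continuousAt.tendsto
  have hderiv : deriv (fun t : ℝ => v (x + t • u)) =ᶠ[𝓝 0]
      fun t => fderiv ℝ v (x + t • u) u := by
    filter_upwards [hline_cont.eventually (hv.eventually (by simp))] with t ht
    exact ((ht.differentiableAt (by norm_num)).hasFDerivAt.comp_hasDerivAt t (hline t)).deriv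
  rw [hderiv.deriv_eq, sdd]
  exact ((hv.differentiableAt_fderiv_apply u).hasFDerivAt.comp_hasDerivAt_of_eq 0 (hline 0)
    (by simp)).deriv.symm

theorem sdd_nonpos_of_isLocalMax (hv : ContDiffAt ℝ 2 v x) (hmax : IsLocalMax v x) (u : E) :
    sdd v x u ≤ 0 := by
  have hline : Continuous fun t : ℝ => x + t • u := by fun_prop
  rw [sdd_eq_deriv_deriv hv]
  have hx : x + (0 : ℝ) • u = x := by simp
  exact deriv_deriv_nonpos_of_isLocalMax
    (IsLocalMax.comp_continuous (by rwa [hx]) hline.continuousAt)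
    (hv.continuousAt.comp_of_eq hline.continuousAt hx)

theorem sdd_add (hv : ContDiffAt ℝ 2 v x) (hw : ContDiffAt ℝ 2 w x) (u : E) :
    sdd (fun y => v y + w y) x u = sdd v x u + sdd w x u := by
  have hfderiv : (fun y => fderiv ℝ (fun z => v z + w z) y u)
      =ᶠ[𝓝 x] fun y => fderiv ℝ v y u + fderiv ℝ w y u := by
    filter_upwards [hv.eventually (by simp), hw.eventually (by simp)] with y hvy hwy
    rw [fderiv_fun_add (hvy.differentiableAt (by norm_num)) (hwy.differentiableAt (by norm_num))]
    rfl
  rw [sdd, hfderiv.fderiv_eq,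
    fderiv_fun_add (hv.differentiableAt_fderiv_apply u) (hw.differentiableAt_fderiv_apply u)]
  rfl

theorem sdd_const_mul (c : ℝ) (u : E) :
    sdd (fun y => c * v y) x u = c * sdd v x u := by
  have h : ∀ f : E → ℝ, fderiv ℝ (fun y => c * f y) = c • fderiv ℝ f :=
    fun f => fderiv_const_smul_field (𝕜 := ℝ) c (f := f)
  simp [sdd, h]

theorem sdd_exp_clm (L : E →L[ℝ] ℝ) (u : E) :
    sdd (fun z => exp (L z)) x u = exp (L x) * L u ^ 2 := by
  have hfderiv : ∀ y, HasFDerivAt (fun z => exp (L z)) (exp (L y) • L) y := fun y =>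
    (hasDerivAt_exp (L y)).comp_hasFDerivAt y L.hasFDerivAt
  have h : (fun y => fderiv ℝ (fun z => exp (L z)) y u) = fun y => exp (L y) * L u := by
    funext y; simp [(hfderiv y).fderiv]
  rw [sdd, h, ((hfderiv x).mul_const (L u)).fderiv]
  simp only [FunLike.coe_smul, Pi.smul_apply, smul_eq_mul]
  ring

end SecondDirectionalDerivative

theorem closure_setOf_lt_norm_fst {E F : Type*} [NormedAddCommGroup E] [NormedSpace ℝ E]
    [TopologicalSpace F] {r : ℝ} (hr : r ≠ 0) :
    closure {x : E × F | r < ‖x.1‖} = {x | r ≤ ‖x.1‖} := by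
  have h : {x : E × F | r < ‖x.1‖} = (Metric.closedBall 0 r)ᶜ ×ˢ univ := by ext; simp
  rw [h, closure_prod_eq, closure_compl, interior_closedBall 0 hr, closure_univ]
  ext; simp

theorem IsCompact.exists_isMaxOn_prod_univ_of_periodic {X : Type*} [TopologicalSpace X]
    {A : Set X} (hA : IsCompact A) (hne : A.Nonempty) {p : ℝ} (hp : 0 < p) {f : X × ℝ → ℝ}
    (hf : ContinuousOn f (A ×ˢ univ)) (hper : ∀ y τ, f (y, τ + p) = f (y, τ)) :
    ∃ z ∈ A ×ˢ univ, IsMaxOn f (A ×ˢ univ) z := by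
  obtain ⟨z, hz, hmax⟩ := (hA.prod isCompact_Icc).exists_isMaxOn
    (hne.prod (nonempty_Icc.2 hp.le)) (hf.mono (prod_mono_right (subset_univ _)))
  refine ⟨z, ⟨hz.1, trivial⟩, ?_⟩
  rintro ⟨y, τ⟩ ⟨hy, -⟩
  obtain ⟨τ', hτ', hfτ⟩ :=
    (show Function.Periodic (fun τ => f (y, τ)) p from hper y).exists_mem_Ico₀ hp τ
  exact hfτ.trans_le (hmax ⟨hy, Ico_subset_Icc_self hτ'⟩)

section Annulus

variable {E : Type*} [NormedAddCommGroup E]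

theorem isCompact_setOf_norm_mem_Icc [ProperSpace E] (r R : ℝ) :
    IsCompact {y : E | r ≤ ‖y‖ ∧ ‖y‖ ≤ R} :=
  Metric.isCompact_of_isClosed_isBounded
    ((isClosed_le continuous_const continuous_norm).inter
      (isClosed_le continuous_norm continuous_const))
    ((Metric.isBounded_closedBall (x := 0) (r := R)).subset fun y hy => by simpa using hy.2)

theorem setOf_norm_mem_Icc_prod_univ_mem_nhds {F : Type*} [TopologicalSpace F] {r R : ℝ}
    {z : E × F} (hr : r < ‖z.1‖) (hR : ‖z.1‖ < R) : {y : E | r ≤ ‖y‖ ∧ ‖y‖ ≤ R} ×ˢ univ ∈ 𝓝 z := by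
  have hopen : IsOpen {z : E × F | r < ‖z.1‖ ∧ ‖z.1‖ < R} :=
    (isOpen_lt continuous_const continuous_fst.norm).inter
      (isOpen_lt continuous_fst.norm continuous_const)
  exact mem_of_superset (hopen.mem_nhds ⟨hr, hR⟩) fun y hy => ⟨⟨hy.1.le, hy.2.le⟩, trivial⟩

end Annulus

section AnisotropicLaplacian

variable {m : ℕ} {c : ℝ} {v w : EuclideanSpace ℝ (Fin m) × ℝ → ℝ}
  {x : EuclideanSpace ℝ (Fin m) × ℝ}

/-- The operator `Δ_y + c ∂²/∂τ²` on `ℝᵐ × ℝ`. -/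
noncomputable def anisoLaplacian (c : ℝ) (w : EuclideanSpace ℝ (Fin m) × ℝ → ℝ)
    (x : EuclideanSpace ℝ (Fin m) × ℝ) : ℝ :=
  (∑ i : Fin m, sdd w x (EuclideanSpace.single i 1, 0)) +
    c * sdd w x ((0 : EuclideanSpace ℝ (Fin m)), (1 : ℝ))

theorem anisoLaplacian_nonpos_of_isLocalMax (hc : 0 ≤ c) (hw : ContDiffAt ℝ 2 w x)
    (hmax : IsLocalMax w x) : anisoLaplacian c w x ≤ 0 :=
  add_nonpos (Finset.sum_nonpos fun _ _ => sdd_nonpos_of_isLocalMax hw hmax _)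
    (mul_nonpos_of_nonneg_of_nonpos hc (sdd_nonpos_of_isLocalMax hw hmax _))

theorem anisoLaplacian_add (hv : ContDiffAt ℝ 2 v x) (hw : ContDiffAt ℝ 2 w x) :
    anisoLaplacian c (fun y => v y + w y) x = anisoLaplacian c v x + anisoLaplacian c w x := by
  simp only [anisoLaplacian, sdd_add hv hw, Finset.sum_add_distrib]
  ring

theorem anisoLaplacian_const_mul (a : ℝ) :
    anisoLaplacian c (fun y => a * w y) x = a * anisoLaplacian c w x := by
  simp only [anisoLaplacian, sdd_const_mul, ← Finset.mul_sum]
  ring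

theorem anisoLaplacian_neg :
    anisoLaplacian c (fun y => -w y) x = -anisoLaplacian c w x := by
  simpa using anisoLaplacian_const_mul (c := c) (w := w) (x := x) (-1)

theorem anisoLaplacian_exp_coord (i : Fin m) :
    anisoLaplacian c (fun z => exp (z.1 i)) x = exp (x.1 i) := by
  have h : ∀ u, sdd (fun z => exp (z.1 i)) x u = exp (x.1 i) * u.1 i ^ 2 :=
    sdd_exp_clm ((EuclideanSpace.proj i).comp (ContinuousLinearMap.fst ℝ _ ℝ))
  simp [anisoLaplacian, h, PiLp.single_apply]

end AnisotropicLaplacian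

theorem nonpos_of_anisoLaplacian_nonneg {m : ℕ} {c p : ℝ} (hc : 0 ≤ c) (hp : 0 < p)
    {w : EuclideanSpace ℝ (Fin m) × ℝ → ℝ}
    (hcont : ContinuousOn w {x | 1 ≤ ‖x.1‖})
    (hsmooth : ContDiffOn ℝ 2 w {x | 1 < ‖x.1‖})
    (hper : ∀ y τ, w (y, τ + p) = w (y, τ))
    (hsub : ∀ x, 1 < ‖x.1‖ → 0 ≤ anisoLaplacian c w x)
    (hbdry : ∀ x, ‖x.1‖ = 1 → w x ≤ 0)
    (hdecay : ∀ ε > 0, ∃ R, ∀ y τ, R ≤ ‖y‖ → w (y, τ) < ε) :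
    ∀ x, 1 < ‖x.1‖ → w x ≤ 0 := by
  intro x hx
  by_contra! hwx
  obtain ⟨i⟩ : Nonempty (Fin m) := by
    by_contra h
    rw [not_nonempty_iff] at h
    norm_num [Subsingleton.elim x.1 0] at hx
  obtain ⟨R₀, hR₀⟩ := hdecay (w x / 2) (by positivity)
  set R := max R₀ ‖x.1‖
  set A := {y : EuclideanSpace ℝ (Fin m) | 1 ≤ ‖y‖ ∧ ‖y‖ ≤ R}
  set δ := w x / (2 * exp R)
  have hδ : 0 < δ := by positivity
  set v := fun z : EuclideanSpace ℝ (Fin m) × ℝ => w z + δ * exp (z.1 i)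
  have hbarrier : ∀ y ∈ A, δ * exp (y i) ≤ w x / 2 := fun y hy => by
    have : exp (y i) ≤ exp R :=
      exp_le_exp.2 (((le_abs_self _).trans (PiLp.norm_apply_le y i)).trans hy.2)
    calc δ * exp (y i) ≤ δ * exp R := by gcongr
      _ = w x / 2 := by simp only [δ]; field_simp
  obtain ⟨z, hz, hzmax⟩ :=
    (isCompact_setOf_norm_mem_Icc 1 R).exists_isMaxOn_prod_univ_of_periodic (f := v)
      ⟨x.1, hx.le, le_max_right _ _⟩ hp
      ((hcont.mono fun z hz => hz.1.1).add (Continuous.continuousOn (by fun_prop)))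
      (fun y τ => by simp only [v, hper])
  have hvz : w x < v z := calc
    w x < v x := lt_add_of_pos_right _ (mul_pos hδ (exp_pos _))
    _ ≤ v z := hzmax ⟨⟨hx.le, le_max_right _ _⟩, trivial⟩
  have hz₁ : 1 < ‖z.1‖ := by
    refine hz.1.1.lt_of_ne fun h => ?_
    linarith [hbdry z h.symm, hbarrier z.1 hz.1]
  have hzR : ‖z.1‖ < R := by
    refine hz.1.2.lt_of_ne fun h => ?_
    linarith [hR₀ z.1 z.2 (h ▸ le_max_left _ _), hbarrier z.1 hz.1]
  have hw : ContDiffAt ℝ 2 w z :=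
    hsmooth.contDiffAt ((isOpen_lt continuous_const continuous_fst.norm).mem_nhds hz₁)
  have hexp : ContDiffAt ℝ 2 (fun z : EuclideanSpace ℝ (Fin m) × ℝ => δ * exp (z.1 i)) z := by
    fun_prop
  have hneg := anisoLaplacian_nonpos_of_isLocalMax hc (hw.add hexp)
    (hzmax.isLocalMax (setOf_norm_mem_Icc_prod_univ_mem_nhds hz₁ hzR))
  rw [anisoLaplacian_add hw hexp, anisoLaplacian_const_mul, anisoLaplacian_exp_coord] at hneg
  linarith [hsub z hz₁, mul_pos hδ (exp_pos (z.1 i))]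

theorem stmt4_general (N : ℕ) (T : ℝ)
    (w : EuclideanSpace ℝ (Fin (N - 1)) × ℝ → ℝ)
    (hcont : ContinuousOn w
      (closure {x : EuclideanSpace ℝ (Fin (N - 1)) × ℝ | 1 < ‖x.1‖}))
    (hsmooth : ContDiffOn ℝ 2 w
      {x : EuclideanSpace ℝ (Fin (N - 1)) × ℝ | 1 < ‖x.1‖})
    (hper : ∀ (y : EuclideanSpace ℝ (Fin (N - 1))) (τ : ℝ),
      w (y, τ + 2 * π) = w (y, τ))
    (heq : ∀ x ∈ {x : EuclideanSpace ℝ (Fin (N - 1)) × ℝ | 1 < ‖x.1‖},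
      (∑ i : Fin (N - 1), sdd w x (EuclideanSpace.single i 1, 0)) +
        (2 * π / T) ^ 2 * sdd w x ((0 : EuclideanSpace ℝ (Fin (N - 1))), (1 : ℝ)) = 0)
    (hbdry : ∀ x : EuclideanSpace ℝ (Fin (N - 1)) × ℝ, ‖x.1‖ = 1 → w x = 0)
    (hdecay : ∀ ε > 0, ∃ R : ℝ, ∀ (y : EuclideanSpace ℝ (Fin (N - 1))) (τ : ℝ),
      R ≤ ‖y‖ → |w (y, τ)| < ε) :
    ∀ x ∈ closure {x : EuclideanSpace ℝ (Fin (N - 1)) × ℝ | 1 < ‖x.1‖}, w x = 0 := by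
  rw [closure_setOf_lt_norm_fst one_ne_zero] at hcont ⊢
  have hc : 0 ≤ (2 * π / T) ^ 2 := sq_nonneg _
  have hle := nonpos_of_anisoLaplacian_nonneg hc two_pi_pos hcont hsmooth hper
    (fun x hx => (heq x hx).ge) (fun x hx => (hbdry x hx).le)
    (fun ε hε => (hdecay ε hε).imp fun R hR y τ hy => (le_abs_self _).trans_lt (hR y τ hy))
  have hge := nonpos_of_anisoLaplacian_nonneg (w := fun x => -w x) hc two_pi_pos hcont.neg
    hsmooth.neg (fun y τ => by simp only [hper])
    (fun x hx => by rw [anisoLaplacian_neg, neg_nonneg]; exact (heq x hx).le)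
    (fun x hx => by simp [hbdry x hx])
    (fun ε hε => (hdecay ε hε).imp fun R hR y τ hy => (neg_le_abs _).trans_lt (hR y τ hy))
  intro x hx
  rcases (show 1 ≤ ‖x.1‖ from hx).eq_or_lt with h | h
  · exact hbdry x h.symm
  · linarith [hle x h, hge x h]

theorem stmt4 (N : ℕ) (hN : 4 ≤ N) (T : ℝ) (hT : 0 < T)
    (w : EuclideanSpace ℝ (Fin (N - 1)) × ℝ → ℝ)
    (hcont : ContinuousOn w
      (closure {x : EuclideanSpace ℝ (Fin (N - 1)) × ℝ | 1 < ‖x.1‖}))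
    (hsmooth : ContDiffOn ℝ 2 w
      {x : EuclideanSpace ℝ (Fin (N - 1)) × ℝ | 1 < ‖x.1‖})
    (hper : ∀ (y : EuclideanSpace ℝ (Fin (N - 1))) (τ : ℝ),
      w (y, τ + 2 * π) = w (y, τ))
    (heq : ∀ x ∈ {x : EuclideanSpace ℝ (Fin (N - 1)) × ℝ | 1 < ‖x.1‖},
      (∑ i : Fin (N - 1), sdd w x (EuclideanSpace.single i 1, 0)) +
        (2 * π / T) ^ 2 * sdd w x ((0 : EuclideanSpace ℝ (Fin (N - 1))), (1 : ℝ)) = 0)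
    (hbdry : ∀ x : EuclideanSpace ℝ (Fin (N - 1)) × ℝ, ‖x.1‖ = 1 → w x = 0)
    (hdecay : ∀ ε > 0, ∃ R : ℝ, ∀ (y : EuclideanSpace ℝ (Fin (N - 1))) (τ : ℝ),
      R ≤ ‖y‖ → |w (y, τ)| < ε) :
    ∀ x ∈ closure {x : EuclideanSpace ℝ (Fin (N - 1)) × ℝ | 1 < ‖x.1‖}, w x = 0 :=
  stmt4_general N T w hcont hsmooth hper heq hbdry hdecay
end
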